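/- arXiv:2512.12127 — 4 statements merged into one kernel-verified Lean document; each statement's English description precedes it below -/
import Mathlib

section
/- Let F = ℂ((t)) be the field of complex formal Laurent series and let L ⊆ F^n be a lattice of rank r (1 ≤ r ≤ n), i.e. the O_F-row span of a matrix A ∈ Mat_{r×n}(F) of rank r, such that L is not contained in any coordinate hyperplane of F^n. Then trop(L) = |Σ_L| ∩ ℤ^n; that is, a vector v ∈ ℤ^n is of the form (val(x_1),…,val(x_n)) for some x ∈ L with all coordinates nonzero if and only if for every j ∈ {1,…,n} there exists J ⊆ [n] with j ∈ J, h_J ≠ ∞ and φ_L(v) = Σ_{i∈J} v_i − h_J. (This is the Laurent-series instance of Theorem A, established by the paper's proof.) -/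
open scoped Classical

noncomputable section

/-- The normalized valuation on formal Laurent series: the smallest exponent of the
support for a nonzero series, and `⊤` for the zero series. -/
def lval {k : Type} [Field k] (x : LaurentSeries k) : WithTop ℤ :=
  if x = 0 then ⊤ else (x.order : WithTop ℤ)

variable {k : Type} [Field k] {r n : ℕ}

/-- Membership in the `O_F`-row span of the matrix `A`, i.e. in the lattice
`L = O_F^r A`, where `O_F = k[[t]]` is the set of Laurent series of valuation `≥ 0`. -/



@[simp] lemma lval_zero : lval (0 : LaurentSeries k) = ⊤ := by simp [lval]

lemma lval_eq_top {x : LaurentSeries k} : lval x = ⊤ ↔ x = 0 := by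
  constructor
  · intro h; by_contra hx; simp [lval, hx] at h
  · intro h; simp [h]

lemma lval_of_ne {x : LaurentSeries k} (hx : x ≠ 0) : lval x = (x.order : WithTop ℤ) := by
  simp [lval, hx]

@[simp] lemma lval_one : lval (1 : LaurentSeries k) = 0 := by
  rw [lval_of_ne one_ne_zero, HahnSeries.order_one]; rfl

lemma lval_mul (x y : LaurentSeries k) : lval (x * y) = lval x + lval y := by
  by_cases hx : x = 0
  · simp [hx]
  by_cases hy : y = 0
  · simp [hy]
  rw [lval_of_ne hx, lval_of_ne hy, lval_of_ne (mul_ne_zero hx hy),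
    HahnSeries.order_mul hx hy]
  push_cast
  rfl

lemma lval_single (a : ℤ) : lval (HahnSeries.single a (1 : k)) = (a : WithTop ℤ) := by
  rw [lval_of_ne (HahnSeries.single_ne_zero one_ne_zero), HahnSeries.order_single one_ne_zero]

lemma lval_neg (x : LaurentSeries k) : lval (-x) = lval x := by
  by_cases hx : x = 0
  · simp [hx]
  · rw [lval_of_ne hx, lval_of_ne (neg_ne_zero.2 hx), HahnSeries.order_neg]

lemma le_lval_add {c : WithTop ℤ} {x y : LaurentSeries k}
    (hx : c ≤ lval x) (hy : c ≤ lval y) : c ≤ lval (x + y) := by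
  by_cases hxy : x + y = 0
  · simp [hxy]
  by_cases hx0 : x = 0
  · simpa [hx0] using hy
  by_cases hy0 : y = 0
  · simpa [hy0] using hx
  rw [lval_of_ne hxy]
  rw [lval_of_ne hx0] at hx
  rw [lval_of_ne hy0] at hy
  have := HahnSeries.min_order_le_order_add hxy
  have h2 : ((min x.order y.order : ℤ) : WithTop ℤ) ≤ ((x+y).order : WithTop ℤ) := by
    exact_mod_cast this
  refine le_trans ?_ h2
  push_cast
  exact le_min hx hy

lemma le_lval_sum {ι : Type*} {c : WithTop ℤ} (hc : c ≤ ⊤) {s : Finset ι}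
    {f : ι → LaurentSeries k} (h : ∀ i ∈ s, c ≤ lval (f i)) :
    c ≤ lval (∑ i ∈ s, f i) := by
  classical
  induction s using Finset.induction_on with
  | empty => simpa using hc
  | insert _ _ hx ih =>
      rw [Finset.sum_insert hx]
      exact le_lval_add (h _ (Finset.mem_insert_self _ _))
        (ih fun i hi => h i (Finset.mem_insert_of_mem hi))

lemma lval_neg_one_pow_mul (e : ℕ) (x : LaurentSeries k) :
    lval ((-1 : LaurentSeries k) ^ e * x) = lval x := by
  rcases neg_one_pow_eq_or (LaurentSeries k) e with h | h <;> simp [h, lval_neg]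

lemma lval_intunit_mul (u : ℤˣ) (x : LaurentSeries k) :
    lval (((u : ℤ) : LaurentSeries k) * x) = lval x := by
  rcases Int.units_eq_one_or u with h | h <;> subst h
  · norm_num
  · have h2 : (((-1 : ℤˣ) : ℤ) : LaurentSeries k) * x = -x := by push_cast; ring
    rw [h2, lval_neg]

lemma lval_eq_zero_of_coeff {x : LaurentSeries k} (h0 : (0 : WithTop ℤ) ≤ lval x)
    (hc : x.coeff 0 ≠ 0) : lval x = 0 := by
  have hx : x ≠ 0 := fun h => hc (by simp [h])
  rw [lval_of_ne hx] at h0 ⊢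
  have h1 : x.order ≤ 0 := HahnSeries.order_le_of_coeff_ne_zero hc
  have h2 : (0:ℤ) ≤ x.order := by exact_mod_cast h0
  have : x.order = 0 := le_antisymm h1 h2
  simp [this]

lemma coeff_zero_ne_of_lval_eq_zero {x : LaurentSeries k} (h : lval x = 0) :
    x.coeff 0 ≠ 0 := by
  have hx : x ≠ 0 := by intro h0; simp [h0] at h
  rw [lval_of_ne hx] at h
  have : x.order = 0 := by exact_mod_cast h
  have h2 : x.coeff x.order ≠ 0 := fun h0 => hx (HahnSeries.coeff_order_eq_zero.mp h0)
  rwa [this] at h2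


def inRowSpan (A : Matrix (Fin r) (Fin n) (LaurentSeries k))
    (x : Fin n → LaurentSeries k) : Prop :=
  ∃ y : Fin r → LaurentSeries k, (∀ i, (0 : WithTop ℤ) ≤ lval (y i)) ∧
    ∀ j, x j = ∑ i, y i * A i j

/-- The tropicalization of the lattice `L = O_F^r A`: `v ∈ trop L` iff `v` is the
coordinatewise valuation of a point of `L` with all coordinates nonzero. -/
def tropMem (A : Matrix (Fin r) (Fin n) (LaurentSeries k)) (v : Fin n → ℤ) : Prop :=
  ∃ x : Fin n → LaurentSeries k, inRowSpan A x ∧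
    ∀ j, x j ≠ 0 ∧ lval (x j) = (v j : WithTop ℤ)

/-- The entropy vector of the lattice `L = O_F^r A`:
`h_J = min { val det A_{I × J} : I ⊆ [r], |I| = |J| }` (with `h_J = ⊤` when there is no
such `I` or all the determinants vanish). -/
def entropy (A : Matrix (Fin r) (Fin n) (LaurentSeries k)) (J : Finset (Fin n)) :
    WithTop ℤ :=
  (Finset.univ : Finset (Finset (Fin r))).inf fun I =>
    if h : I.card = J.card then
      lval (Matrix.det (Matrix.of fun a b : Fin J.card =>
        A (I.orderIsoOfFin h a).val (J.orderIsoOfFin rfl b).val))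
    else ⊤

section Ent
variable (A : Matrix (Fin r) (Fin n) (LaurentSeries k))

lemma lval_det_submatrix {m p : ℕ} (M : Matrix (Fin p) (Fin p) (LaurentSeries k))
    (e₁ e₂ : Fin m ≃ Fin p) :
    lval (Matrix.det (M.submatrix e₁ e₂)) = lval M.det := by
  have h1 : M.submatrix e₁ e₂ =
      (M.submatrix e₁ e₁).submatrix id ⇑(e₂.trans e₁.symm : Equiv.Perm (Fin m)) := by
    apply Matrix.ext
    intro a b
    simp only [Matrix.submatrix_apply, id_eq, Equiv.trans_apply, Equiv.apply_symm_apply]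
  rw [h1, Matrix.det_permute', Matrix.det_submatrix_equiv_self, lval_intunit_mul]

lemma entropy_le {I : Finset (Fin r)} {J : Finset (Fin n)} (h : I.card = J.card) :
    entropy A J ≤ lval (Matrix.det (Matrix.of fun a b : Fin J.card =>
      A (I.orderIsoOfFin h a).val (J.orderIsoOfFin rfl b).val)) := by
  have h2 := Finset.inf_le (f := fun I : Finset (Fin r) =>
    if h : I.card = J.card then
      lval (Matrix.det (Matrix.of fun a b : Fin J.card =>
        A (I.orderIsoOfFin h a).val (J.orderIsoOfFin rfl b).val))
    else ⊤) (Finset.mem_univ I)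
  exact h2.trans_eq (dif_pos h)

lemma entropy_empty : entropy A ∅ = 0 := by
  apply le_antisymm
  · have h2 := entropy_le A (I := (∅ : Finset (Fin r))) (J := (∅ : Finset (Fin n))) rfl
    refine h2.trans (le_of_eq ?_)
    haveI : IsEmpty (Fin (∅ : Finset (Fin n)).card) :=
      ⟨fun a => absurd a.isLt (by simp)⟩
    rw [Matrix.det_isEmpty]
    simp [lval]
  · apply Finset.le_inf
    intro I _
    by_cases h : I.card = (∅ : Finset (Fin n)).card
    · refine le_trans (le_of_eq ?_) (le_of_eq (dif_pos h).symm)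
      haveI : IsEmpty (Fin (∅ : Finset (Fin n)).card) :=
        ⟨fun a => absurd a.isLt (by simp)⟩
      rw [Matrix.det_isEmpty]
      simp [lval]
    · rw [dif_neg h]
      exact le_top

lemma entropy_exists_I {J : Finset (Fin n)} (hJ : entropy A J ≠ ⊤) :
    ∃ I : Finset (Fin r), ∃ h : I.card = J.card,
      lval (Matrix.det (Matrix.of fun a b : Fin J.card =>
        A (I.orderIsoOfFin h a).val (J.orderIsoOfFin rfl b).val)) = entropy A J := by
  obtain ⟨I, -, hI⟩ := Finset.exists_mem_eq_inf (Finset.univ : Finset (Finset (Fin r)))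
    ⟨∅, Finset.mem_univ _⟩ (fun I : Finset (Fin r) =>
      if h : I.card = J.card then
        lval (Matrix.det (Matrix.of fun a b : Fin J.card =>
          A (I.orderIsoOfFin h a).val (J.orderIsoOfFin rfl b).val))
      else ⊤)
  by_cases h : I.card = J.card
  · refine ⟨I, h, ?_⟩
    rw [entropy, hI, dif_pos h]
  · exfalso
    apply hJ
    rw [entropy, hI, dif_neg h]

lemma image_univ_eq {m : ℕ} {α : Type*} [DecidableEq α] {f : Fin m → α} {s : Finset α}
    (hs : Set.range f = ↑s) : Finset.univ.image f = s := by
  apply Finset.coe_injective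
  rw [Finset.coe_image, Finset.coe_univ, Set.image_univ, hs]

/-- An equivalence from `Fin m` to a finset `s` given an injective enumeration. -/
def enumEquiv {m : ℕ} {α : Type*} [DecidableEq α] (f : Fin m → α) (hf : Function.Injective f)
    (s : Finset α) (hs : Finset.univ.image f = s) : Fin m ≃ {x // x ∈ s} :=
  Equiv.ofBijective
    (fun a => ⟨f a, by rw [← hs]; exact Finset.mem_image_of_mem f (Finset.mem_univ a)⟩)
    (by
      constructor
      · intro a b hab
        exact hf (congrArg Subtype.val hab)
      · rintro ⟨x, hx⟩
        rw [← hs] at hx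
        obtain ⟨a, -, rfl⟩ := Finset.mem_image.1 hx
        exact ⟨a, rfl⟩)

lemma enumEquiv_val {m : ℕ} {α : Type*} [DecidableEq α] (f : Fin m → α)
    (hf : Function.Injective f) (s : Finset α) (hs : Finset.univ.image f = s) (a : Fin m) :
    (enumEquiv f hf s hs a : α) = f a := rfl

lemma entropy_le_lval_det_inj {m : ℕ} {q : Fin m → Fin r} {γ : Fin m → Fin n}
    (hq : Function.Injective q) (hγ : Function.Injective γ) :
    entropy A (Finset.univ.image γ) ≤
      lval (Matrix.det (Matrix.of fun a b => A (q a) (γ b))) := by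
  set I : Finset (Fin r) := Finset.univ.image q with hI
  set J : Finset (Fin n) := Finset.univ.image γ with hJ
  have hIc : I.card = J.card := by
    rw [hI, hJ, Finset.card_image_of_injective _ hq, Finset.card_image_of_injective _ hγ]
  set e₁ : Fin m ≃ Fin J.card :=
    (enumEquiv q hq I rfl).trans ((I.orderIsoOfFin hIc).symm.toEquiv) with he₁
  set e₂ : Fin m ≃ Fin J.card :=
    (enumEquiv γ hγ J rfl).trans ((J.orderIsoOfFin rfl).symm.toEquiv) with he₂
  have key₁ : ∀ a, ((I.orderIsoOfFin hIc) (e₁ a)).val = q a := by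
    intro a
    have h4 : (I.orderIsoOfFin hIc) (e₁ a) = enumEquiv q hq I rfl a :=
      (I.orderIsoOfFin hIc).apply_symm_apply _
    rw [h4]; rfl
  have key₂ : ∀ b, ((J.orderIsoOfFin rfl) (e₂ b)).val = γ b := by
    intro b
    have h4 : (J.orderIsoOfFin rfl) (e₂ b) = enumEquiv γ hγ J rfl b :=
      (J.orderIsoOfFin rfl).apply_symm_apply _
    rw [h4]; rfl
  have hmat : (Matrix.of fun a b => A (q a) (γ b)) =
      (Matrix.of fun a b : Fin J.card =>
        A ((I.orderIsoOfFin hIc) a).val ((J.orderIsoOfFin rfl) b).val).submatrix e₁ e₂ := by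
    apply Matrix.ext
    intro a b
    simp only [Matrix.submatrix_apply, Matrix.of_apply, key₁ a, key₂ b]
  rw [hmat, lval_det_submatrix]
  exact entropy_le A hIc

lemma entropy_attained_along {J : Finset (Fin n)} (hJ : entropy A J ≠ ⊤) {m : ℕ}
    {γ : Fin m → Fin n} (hγ : Function.Injective γ) (him : Finset.univ.image γ = J) :
    ∃ q : Fin m → Fin r, Function.Injective q ∧
      lval (Matrix.det (Matrix.of fun a b => A (q a) (γ b))) = entropy A J := by
  obtain ⟨I, h, hval⟩ := entropy_exists_I A hJ
  set e₂ : Fin m ≃ Fin J.card :=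
    (enumEquiv γ hγ J him).trans ((J.orderIsoOfFin rfl).symm.toEquiv) with he₂
  have key₂ : ∀ b, ((J.orderIsoOfFin rfl) (e₂ b)).val = γ b := by
    intro b
    have h4 : (J.orderIsoOfFin rfl) (e₂ b) = enumEquiv γ hγ J him b :=
      (J.orderIsoOfFin rfl).apply_symm_apply _
    rw [h4]; rfl
  refine ⟨fun a => ((I.orderIsoOfFin h) (e₂ a)).val, ?_, ?_⟩
  · intro a b hab
    have h5 := Subtype.coe_injective hab
    exact e₂.injective ((I.orderIsoOfFin h).injective h5)
  · have hmat : (Matrix.of fun a b => A (((I.orderIsoOfFin h) (e₂ a)).val) (γ b)) =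
        (Matrix.of fun a b : Fin J.card =>
          A ((I.orderIsoOfFin h) a).val ((J.orderIsoOfFin rfl) b).val).submatrix e₂ e₂ := by
      apply Matrix.ext
      intro a b
      simp only [Matrix.submatrix_apply, Matrix.of_apply, key₂ b]
    rw [hmat]
    rw [show ((Matrix.of fun a b : Fin J.card =>
          A ((I.orderIsoOfFin h) a).val ((J.orderIsoOfFin rfl) b).val).submatrix e₂ e₂).det =
        (Matrix.of fun a b : Fin J.card =>
          A ((I.orderIsoOfFin h) a).val ((J.orderIsoOfFin rfl) b).val).det from
      Matrix.det_submatrix_equiv_self e₂ _]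
    exact hval

end Ent

section Core

lemma snoc_inj {m : ℕ} {α : Type} {f : Fin m → α} (hf : Function.Injective f) {x : α}
    (hx : ∀ a, f a ≠ x) : Function.Injective (Fin.snoc f x : Fin (m+1) → α) := by
  intro a b hab
  rcases Fin.eq_castSucc_or_eq_last a with ⟨a', rfl⟩ | rfl <;>
    rcases Fin.eq_castSucc_or_eq_last b with ⟨b', rfl⟩ | rfl
  · simp only [Fin.snoc_castSucc] at hab
    rw [hf hab]
  · simp only [Fin.snoc_castSucc, Fin.snoc_last] at hab
    exact absurd hab (hx a')
  · simp only [Fin.snoc_castSucc, Fin.snoc_last] at hab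
    exact absurd hab.symm (hx b')
  · rfl

lemma image_snoc {m : ℕ} {α : Type} [DecidableEq α] (f : Fin m → α) (x : α) :
    Finset.univ.image (Fin.snoc f x : Fin (m+1) → α) =
      insert x (Finset.univ.image f) := by
  ext u
  simp only [Finset.mem_image, Finset.mem_insert, Finset.mem_univ, true_and]
  constructor
  · rintro ⟨a, rfl⟩
    rcases Fin.eq_castSucc_or_eq_last a with ⟨a', rfl⟩ | rfl
    · right; exact ⟨a', by simp⟩
    · left; simp
  · rintro (rfl | ⟨a, rfl⟩)
    · exact ⟨Fin.last m, by simp⟩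
    · exact ⟨a.castSucc, by simp⟩

lemma det_updateRow_linear {m : ℕ} (M : Matrix (Fin m) (Fin m) (LaurentSeries k)) (p : Fin m)
    {ι : Type} (s : Finset ι) (f : ι → LaurentSeries k) (u : ι → Fin m → LaurentSeries k) :
    (M.updateRow p (∑ i ∈ s, f i • u i)).det = ∑ i ∈ s, f i * (M.updateRow p (u i)).det := by
  induction s using Finset.induction_on with
  | empty =>
      rw [Finset.sum_empty, Finset.sum_empty]
      exact Matrix.det_eq_zero_of_row_eq_zero p (fun j => by simp)
  | @insert a s ha ih =>
      rw [Finset.sum_insert ha, Finset.sum_insert ha, Matrix.det_updateRow_add,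
        Matrix.det_updateRow_smul, ih]

lemma tneg_bound {μ₀ : ℤ} {z : LaurentSeries k} (hz : ((μ₀ : ℤ) : WithTop ℤ) ≤ lval z) :
    (0 : WithTop ℤ) ≤ lval (HahnSeries.single (-μ₀ : ℤ) (1:k) * z) := by
  rw [lval_mul, lval_single]
  have h0 : (0 : WithTop ℤ) = ((-μ₀ : ℤ) : WithTop ℤ) + ((μ₀ : ℤ) : WithTop ℤ) := by
    rw [← WithTop.coe_add]
    norm_num
  rw [h0]
  exact add_le_add_right hz _

/-- Construction of a lattice element with unit `j`-th coordinate from an entropy-minimal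
set containing `j`. -/
lemma lemma_up {B : Matrix (Fin r) (Fin n) (LaurentSeries k)} {J : Finset (Fin n)} {j : Fin n}
    (hjJ : j ∈ J)
    (hatt : entropy B J = (Finset.univ : Finset (Finset (Fin n))).inf fun K => entropy B K) :
    ∃ x y : _ → LaurentSeries k, (∀ i, (0 : WithTop ℤ) ≤ lval (y i)) ∧
      (∀ k', x k' = ∑ i, y i * B i k') ∧
      (∀ k', (0 : WithTop ℤ) ≤ lval (x k')) ∧ lval (x j) = 0 := by
  set μ : WithTop ℤ := (Finset.univ : Finset (Finset (Fin n))).inf (fun K => entropy B K)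
    with hμdef
  have hμ0 : μ ≤ 0 := le_trans (Finset.inf_le (Finset.mem_univ ∅)) (le_of_eq (entropy_empty B))
  have hμtop : μ ≠ ⊤ := fun h => by simp [h] at hμ0
  obtain ⟨μ₀, hμ₀⟩ : ∃ z : ℤ, μ = ((z : ℤ) : WithTop ℤ) := by
    rcases WithTop.ne_top_iff_exists.mp hμtop with ⟨z, hz⟩
    exact ⟨z, hz.symm⟩
  have hμle : ∀ K : Finset (Fin n), μ ≤ entropy B K := fun K =>
    Finset.inf_le (Finset.mem_univ K)
  have hJtop : entropy B J ≠ ⊤ := by rw [hatt]; exact hμtop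
  -- enumeration of J with j last
  set m := (J.erase j).card with hm
  set ordE : Fin m → Fin n := (⇑((J.erase j).orderEmbOfFin rfl) : Fin m → Fin n) with hordE
  have hordEinj : Function.Injective ordE := ((J.erase j).orderEmbOfFin rfl).injective
  have hordEim : Finset.univ.image ordE = J.erase j :=
    image_univ_eq ((J.erase j).range_orderEmbOfFin rfl)
  set γ : Fin (m+1) → Fin n := (Fin.snoc ordE j : Fin (m+1) → Fin n) with hγ
  have hγinj : Function.Injective γ := by
    apply snoc_inj hordEinj
    intro a h
    have : ordE a ∈ J.erase j := by rw [← hordEim]; exact Finset.mem_image_of_mem _ (Finset.mem_univ a)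
    rw [h] at this
    exact (Finset.notMem_erase j J) this
  have hγim : Finset.univ.image γ = J := by
    rw [hγ, image_snoc, hordEim, Finset.insert_erase hjJ]
  obtain ⟨q, hqinj, hqval⟩ := entropy_attained_along B hJtop hγinj hγim
  -- the family of matrices
  set Bk : Fin n → Matrix (Fin (m+1)) (Fin (m+1)) (LaurentSeries k) :=
    fun k' => Matrix.of fun a b => B (q a) ((Fin.snoc ordE k' : Fin (m+1) → Fin n) b) with hBk
  set minor : Fin (m+1) → Matrix (Fin m) (Fin m) (LaurentSeries k) :=
    fun p => Matrix.of fun a b => B (q (p.succAbove a)) (ordE b) with hminor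
  set c : Fin (m+1) → LaurentSeries k :=
    fun p => (-1 : LaurentSeries k) ^ ((p : ℕ) + ((Fin.last m : Fin (m+1)) : ℕ)) *
      (minor p).det with hc
  have hdetBk : ∀ k', (Bk k').det = ∑ p, c p * B (q p) k' := by
    intro k'
    rw [Matrix.det_succ_column (Bk k') (Fin.last m)]
    refine Finset.sum_congr rfl fun p _ => ?_
    have h1 : (Bk k') p (Fin.last m) = B (q p) k' := by
      simp [hBk]
    have h2 : (Bk k').submatrix p.succAbove (Fin.last m).succAbove = minor p := by
      apply Matrix.ext
      intro a b
      simp [hBk, hminor, Fin.succAbove_last]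
    rw [h1, h2, hc]
    ring
  have hcval : ∀ p, μ ≤ lval (c p) := by
    intro p
    show μ ≤ lval ((-1 : LaurentSeries k) ^ ((p : ℕ) + ((Fin.last m : Fin (m+1)) : ℕ)) *
      (minor p).det)
    rw [lval_neg_one_pow_mul]
    have h5 : minor p = Matrix.of fun a b => B (q (p.succAbove a)) (ordE b) := by rw [hminor]
    rw [h5]
    exact le_trans (hμle (Finset.univ.image ordE))
      (entropy_le_lval_det_inj B (q := fun a => q (p.succAbove a)) (γ := ordE)
        (hqinj.comp (Fin.succAbove_right_injective)) hordEinj)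
  -- the witness
  set tneg : LaurentSeries k := HahnSeries.single (-μ₀ : ℤ) (1:k) with htneg
  refine ⟨fun k' => tneg * (Bk k').det,
    fun i => tneg * ∑ p ∈ Finset.univ.filter (fun p => q p = i), c p, ?_, ?_, ?_, ?_⟩
  · -- y has nonnegative valuation
    intro i
    apply tneg_bound
    rw [← hμ₀]
    refine le_lval_sum le_top ?_
    intro p _
    exact hcval p
  · -- x = y B
    intro k'
    show tneg * (Bk k').det = ∑ i, (tneg * ∑ p ∈ Finset.univ.filter (fun p => q p = i), c p) * B i k'
    have step1 : ∀ i, (tneg * ∑ p ∈ Finset.univ.filter (fun p => q p = i), c p) * B i k' =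
        tneg * ∑ p ∈ Finset.univ.filter (fun p => q p = i), c p * B (q p) k' := by
      intro i
      rw [mul_assoc, Finset.sum_mul]
      congr 1
      refine Finset.sum_congr rfl fun p hp => ?_
      rw [(Finset.mem_filter.mp hp).2]
    rw [Finset.sum_congr rfl (fun i _ => step1 i), ← Finset.mul_sum]
    rw [Finset.sum_fiberwise_of_maps_to (g := q) (fun p _ => Finset.mem_univ (q p))
      (fun p => c p * B (q p) k')]
    rw [hdetBk k']
  · -- all coordinates have nonnegative valuation
    intro k'
    show (0 : WithTop ℤ) ≤ lval (tneg * (Bk k').det)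
    by_cases hkJ : k' ∈ J
    · by_cases hkj : k' = j
      · subst hkj
        have hBkk : (Bk k') = Matrix.of fun a b => B (q a) (γ b) := by
          apply Matrix.ext; intro a b; simp [hBk, hγ]
        rw [hBkk]
        apply tneg_bound
        rw [hqval, hatt]
        exact le_of_eq hμ₀.symm
      · -- repeated column
        have hkE : k' ∈ J.erase j := Finset.mem_erase.mpr ⟨hkj, hkJ⟩
        rw [← hordEim] at hkE
        obtain ⟨b₀, -, hb₀⟩ := Finset.mem_image.mp hkE
        have hdet0 : (Bk k').det = 0 := by
          apply Matrix.det_zero_of_column_eq (i_ne_j := Fin.ne_of_lt (Fin.castSucc_lt_last b₀))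
          intro a
          simp [hBk, hb₀]
        rw [hdet0, mul_zero, lval_zero]
        exact le_top
      
    · -- new column, injective enumeration
      have hsnocinj : Function.Injective (Fin.snoc ordE k' : Fin (m+1) → Fin n) := by
        apply snoc_inj hordEinj
        intro a h
        have : ordE a ∈ J.erase j := by
          rw [← hordEim]; exact Finset.mem_image_of_mem _ (Finset.mem_univ a)
        rw [h] at this
        exact hkJ (Finset.mem_of_mem_erase this)
      apply tneg_bound
      rw [← hμ₀]
      have hBkk : (Bk k') = Matrix.of fun a b => B (q a) ((Fin.snoc ordE k' : Fin (m+1) → Fin n) b) := by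
        rw [hBk]
      rw [hBkk]
      exact le_trans (hμle (Finset.univ.image (Fin.snoc ordE k' : Fin (m+1) → Fin n)))
        (entropy_le_lval_det_inj B hqinj hsnocinj)
  · -- valuation at j is zero
    show lval (tneg * (Bk j).det) = 0
    have hBkk : (Bk j) = Matrix.of fun a b => B (q a) (γ b) := by
      apply Matrix.ext; intro a b; simp [hBk, hγ]
    rw [hBkk, lval_mul, htneg, lval_single, hqval, hatt, hμ₀, ← WithTop.coe_add]
    norm_num

end Core

/-- If the lattice contains an integral element with unit `j`-th coordinate, then some
entropy-minimal set contains `j`. -/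
lemma lemma_down {B : Matrix (Fin r) (Fin n) (LaurentSeries k)}
    {x : Fin n → LaurentSeries k} {y : Fin r → LaurentSeries k}
    (hy : ∀ i, (0 : WithTop ℤ) ≤ lval (y i))
    (hxeq : ∀ k', x k' = ∑ i, y i * B i k')
    (hx0 : ∀ k', (0 : WithTop ℤ) ≤ lval (x k'))
    {j : Fin n} (hxj : lval (x j) = 0) :
    ∃ J : Finset (Fin n), j ∈ J ∧
      entropy B J = (Finset.univ : Finset (Finset (Fin n))).inf fun K => entropy B K := by
  set μ : WithTop ℤ := (Finset.univ : Finset (Finset (Fin n))).inf (fun K => entropy B K)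
    with hμdef
  have hμ0 : μ ≤ 0 := le_trans (Finset.inf_le (Finset.mem_univ ∅)) (le_of_eq (entropy_empty B))
  have hμtop : μ ≠ ⊤ := fun h => by simp [h] at hμ0
  set μj : WithTop ℤ := ((Finset.univ : Finset (Finset (Fin n))).filter
    (fun K => j ∈ K)).inf (fun K => entropy B K) with hμjdef
  have hfilne : ((Finset.univ : Finset (Finset (Fin n))).filter (fun K => j ∈ K)).Nonempty :=
    ⟨{j}, by simp⟩
  have hμjle : ∀ K : Finset (Fin n), j ∈ K → μj ≤ entropy B K := fun K hK =>
    Finset.inf_le (Finset.mem_filter.mpr ⟨Finset.mem_univ K, hK⟩)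
  obtain ⟨J₁, hJ₁mem, hJ₁⟩ := Finset.exists_mem_eq_inf _ hfilne (fun K => entropy B K)
  refine ⟨J₁, (Finset.mem_filter.mp hJ₁mem).2, ?_⟩
  rw [← hJ₁]
  refine le_antisymm ?_ (by rw [hJ₁]; exact Finset.inf_le (Finset.mem_univ J₁))
  -- suppose not: μ < μj
  by_contra hlt'
  have hlt : μ < μj := lt_of_not_ge hlt'
  obtain ⟨J₀, -, hJ₀⟩ := Finset.exists_mem_eq_inf
    (Finset.univ : Finset (Finset (Fin n))) ⟨∅, Finset.mem_univ ∅⟩ (fun K => entropy B K)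
  have hJ₀top : entropy B J₀ ≠ ⊤ := by rw [← hJ₀]; exact hμtop
  have hjJ₀ : j ∉ J₀ := by
    intro hj
    have h6 : μj ≤ μ := by
      rw [hμdef, hJ₀]
      exact hμjle J₀ hj
    exact absurd h6 (not_le_of_gt hlt)
  set m := J₀.card with hm
  set ordJ : Fin m → Fin n := (⇑(J₀.orderEmbOfFin rfl) : Fin m → Fin n) with hordJ
  have hordJinj : Function.Injective ordJ := (J₀.orderEmbOfFin rfl).injective
  have hordJim : Finset.univ.image ordJ = J₀ := image_univ_eq (J₀.range_orderEmbOfFin rfl)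
  obtain ⟨q, hqinj, hqval⟩ := entropy_attained_along B hJ₀top hordJinj hordJim
  set γ : Fin (m+1) → Fin n := (Fin.snoc ordJ j : Fin (m+1) → Fin n) with hγ
  have hγinj : Function.Injective γ := by
    apply snoc_inj hordJinj
    intro a h
    have h2 : ordJ a ∈ J₀ := by rw [← hordJim]; exact Finset.mem_image_of_mem _ (Finset.mem_univ a)
    rw [h] at h2
    exact hjJ₀ h2
  have hγcast : ∀ b : Fin m, γ (Fin.castSucc b) = ordJ b := by
    intro b; rw [hγ]; simp
  have hγlast : γ (Fin.last m) = j := by rw [hγ]; simp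
  -- the matrix D with last row x
  set rowF : Fin (m+1) → Fin (m+1) → LaurentSeries k :=
    (Fin.snoc (fun a b => B (q a) (γ b)) (fun b => x (γ b))) with hrowF
  set D : Matrix (Fin (m+1)) (Fin (m+1)) (LaurentSeries k) := Matrix.of rowF with hD
  have hDrow : ∀ (a : Fin m) (b : Fin (m+1)), D (Fin.castSucc a) b = B (q a) (γ b) := by
    intro a b
    show rowF (Fin.castSucc a) b = _
    rw [hrowF]
    rw [Fin.snoc_castSucc]
  have hDlastrow : ∀ b : Fin (m+1), D (Fin.last m) b = x (γ b) := by
    intro b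
    show rowF (Fin.last m) b = _
    rw [hrowF, Fin.snoc_last]
  -- (a) valuation of det D is at least μj
  have hdetD : μj ≤ lval D.det := by
    have hDlast : D.updateRow (Fin.last m) (fun b => x (γ b)) = D := by
      apply Matrix.ext; intro a b
      by_cases ha : a = Fin.last m
      · subst ha
        rw [Matrix.updateRow_self]
        exact (hDlastrow b).symm
      · rw [Matrix.updateRow_ne ha]
    have hrow_comb : (fun b => x (γ b)) = ∑ i, y i • (fun b => B i (γ b)) := by
      funext b
      rw [hxeq (γ b)]
      simp
    rw [← hDlast, hrow_comb, det_updateRow_linear]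
    refine le_lval_sum le_top ?_
    intro i _
    rw [lval_mul]
    have hdet2 : μj ≤ lval ((D.updateRow (Fin.last m) (fun b => B i (γ b))).det) := by
      by_cases hcase : ∃ a₀, q a₀ = i
      · obtain ⟨a₀, rfl⟩ := hcase
        have hz : (D.updateRow (Fin.last m) fun b => B (q a₀) (γ b)).det = 0 := by
          apply Matrix.det_zero_of_row_eq (Fin.ne_of_lt (Fin.castSucc_lt_last a₀))
          funext b
          rw [Matrix.updateRow_ne (Fin.ne_of_lt (Fin.castSucc_lt_last a₀)),
            Matrix.updateRow_self]
          exact hDrow a₀ b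
        rw [hz, lval_zero]
        exact le_top
      · push_neg at hcase
        have hmat : D.updateRow (Fin.last m) (fun b => B i (γ b)) =
            Matrix.of fun a b => B ((Fin.snoc q i : Fin (m+1) → Fin r) a) (γ b) := by
          apply Matrix.ext; intro a b
          rcases Fin.eq_castSucc_or_eq_last a with ⟨a', rfl⟩ | rfl
          · rw [Matrix.updateRow_ne (Fin.ne_of_lt (Fin.castSucc_lt_last a'))]
            rw [hDrow a' b]
            simp
          · rw [Matrix.updateRow_self]
            simp
        rw [hmat]
        have hq'inj : Function.Injective (Fin.snoc q i : Fin (m+1) → Fin r) :=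
          snoc_inj hqinj hcase
        refine le_trans (hμjle (Finset.univ.image γ) ?_) (entropy_le_lval_det_inj B hq'inj hγinj)
        exact Finset.mem_image.mpr ⟨Fin.last m, Finset.mem_univ _, hγlast⟩
    calc μj = 0 + μj := (zero_add μj).symm
      _ ≤ lval (y i) + lval ((D.updateRow (Fin.last m) (fun b => B i (γ b))).det) :=
        add_le_add (hy i) hdet2
  -- (b) Laplace expansion along the last row
  set T : Fin (m+1) → LaurentSeries k := fun b =>
    (-1 : LaurentSeries k) ^ (((Fin.last m : Fin (m+1)) : ℕ) + (b : ℕ)) * D (Fin.last m) b *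
      (D.submatrix (Fin.last m).succAbove b.succAbove).det with hT
  have hTval : ∀ b : Fin (m+1), lval (T b) =
      lval (x (γ b)) + lval ((D.submatrix (Fin.last m).succAbove b.succAbove).det) := by
    intro b
    show lval ((-1 : LaurentSeries k) ^ _ * D (Fin.last m) b * _) = _
    rw [mul_assoc, lval_neg_one_pow_mul, lval_mul, hDlastrow]
  have hTμj : ∀ b : Fin (m+1), b ≠ Fin.last m → μj ≤ lval (T b) := by
    intro b hb
    rw [hTval b]
    have hminor : D.submatrix (Fin.last m).succAbove b.succAbove =
        Matrix.of fun a b' => B (q a) (γ (b.succAbove b')) := by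
      apply Matrix.ext; intro a b'
      rw [Matrix.submatrix_apply, Fin.succAbove_last]
      exact hDrow a _
    have hcolinj : Function.Injective (fun b' => γ (b.succAbove b')) :=
      hγinj.comp (Fin.succAbove_right_injective)
    have hjmem : j ∈ Finset.univ.image (fun b' => γ (b.succAbove b')) := by
      obtain ⟨z, hz⟩ := Fin.exists_succAbove_eq (Ne.symm hb)
      exact Finset.mem_image.mpr ⟨z, Finset.mem_univ _, by rw [hz, hγlast]⟩
    have hdm : μj ≤ lval ((D.submatrix (Fin.last m).succAbove b.succAbove).det) := by
      rw [hminor]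
      exact le_trans (hμjle _ hjmem) (entropy_le_lval_det_inj B hqinj hcolinj)
    calc μj = 0 + μj := (zero_add μj).symm
      _ ≤ lval (x (γ b)) + _ := add_le_add (hx0 (γ b)) hdm
  have hTlast : lval (T (Fin.last m)) = μ := by
    rw [hTval]
    have hminor : D.submatrix (Fin.last m).succAbove (Fin.last m).succAbove =
        Matrix.of fun a b' => B (q a) (ordJ b') := by
      apply Matrix.ext; intro a b'
      rw [Matrix.submatrix_apply, Fin.succAbove_last]
      rw [hDrow a _, hγcast]
      rfl
    rw [hminor, hγlast, hxj, hqval, ← hJ₀, zero_add]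
  have hsplit : D.det = T (Fin.last m) + ∑ b ∈ Finset.univ.erase (Fin.last m), T b := by
    rw [Matrix.det_succ_row D (Fin.last m)]
    exact (Finset.add_sum_erase _ T (Finset.mem_univ _)).symm
  have hfinal : μj ≤ lval (T (Fin.last m)) := by
    have h1 : T (Fin.last m) = D.det + -∑ b ∈ Finset.univ.erase (Fin.last m), T b := by
      rw [hsplit]; ring
    rw [h1]
    refine le_lval_add hdetD ?_
    rw [lval_neg]
    exact le_lval_sum le_top (fun b hb => hTμj b (Finset.ne_of_mem_erase hb))
  rw [hTlast] at hfinal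
  exact absurd hfinal (not_le_of_gt hlt)


section Scale

lemma prod_single {β : Type} (s : Finset β) (w : β → ℤ) :
    ∏ b ∈ s, HahnSeries.single (w b) (1:k) = HahnSeries.single (∑ b ∈ s, w b) (1:k) := by
  induction s using Finset.induction_on with
  | empty => simp [HahnSeries.single_zero_one]
  | @insert a s ha ih =>
      rw [Finset.prod_insert ha, ih, HahnSeries.single_mul_single, Finset.sum_insert ha, one_mul]

lemma inf_const_add {ι : Type} (s : Finset ι) (hne : s.Nonempty) (c : ℤ) (f : ι → WithTop ℤ) :
    s.inf (fun i => (c : WithTop ℤ) + f i) = (c : WithTop ℤ) + s.inf f := by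
  apply le_antisymm
  · obtain ⟨i, hi, hinf⟩ := Finset.exists_mem_eq_inf s hne f
    rw [hinf]
    exact Finset.inf_le hi
  · apply Finset.le_inf
    intro i hi
    exact add_le_add_right (Finset.inf_le hi) _

lemma sum_orderIso (v : Fin n → ℤ) (J : Finset (Fin n)) :
    ∑ b : Fin J.card, v (((J.orderIsoOfFin rfl) b) : Fin n) = ∑ j ∈ J, v j := by
  have h1 : ∑ b : Fin J.card, v (((J.orderIsoOfFin rfl) b) : Fin n)
      = ∑ x : {j // j ∈ J}, v x.val :=
    Fintype.sum_equiv (J.orderIsoOfFin rfl).toEquiv _ _ (fun b => rfl)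
  rw [h1, Finset.univ_eq_attach, Finset.sum_attach]

lemma entropy_scale (A : Matrix (Fin r) (Fin n) (LaurentSeries k)) (v : Fin n → ℤ)
    (J : Finset (Fin n)) :
    entropy (Matrix.of fun i j' => HahnSeries.single (-(v j')) (1:k) * A i j') J
      = ((-(∑ j' ∈ J, v j') : ℤ) : WithTop ℤ) + entropy A J := by
  have hpt : ∀ I : Finset (Fin r),
      (if h : I.card = J.card then
        lval (Matrix.det (Matrix.of fun a b : Fin J.card =>
          (Matrix.of fun i j' => HahnSeries.single (-(v j')) (1:k) * A i j')
            (I.orderIsoOfFin h a).val (J.orderIsoOfFin rfl b).val))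
      else ⊤)
      = ((-(∑ j' ∈ J, v j') : ℤ) : WithTop ℤ) +
        (if h : I.card = J.card then
          lval (Matrix.det (Matrix.of fun a b : Fin J.card =>
            A (I.orderIsoOfFin h a).val (J.orderIsoOfFin rfl b).val))
        else ⊤) := by
    intro I
    by_cases h : I.card = J.card
    · rw [dif_pos h, dif_pos h]
      have hdet : (Matrix.det (Matrix.of fun a b : Fin J.card =>
          (Matrix.of fun i j' => HahnSeries.single (-(v j')) (1:k) * A i j')
            (I.orderIsoOfFin h a).val (J.orderIsoOfFin rfl b).val))
          = (∏ b : Fin J.card, HahnSeries.single (-(v (((J.orderIsoOfFin rfl) b) : Fin n))) (1:k)) *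
            (Matrix.det (Matrix.of fun a b : Fin J.card =>
              A (I.orderIsoOfFin h a).val (J.orderIsoOfFin rfl b).val)) := by
        exact Matrix.det_mul_row _ _
      rw [hdet, lval_mul, prod_single]
      congr 1
      rw [← Finset.sum_neg_distrib, sum_orderIso (fun j' => -(v j')) J, lval_single]
    · rw [dif_neg h, dif_neg h]
      rw [WithTop.add_top]
  show Finset.univ.inf _ = _
  rw [Finset.inf_congr rfl (fun I _ => hpt I)]
  rw [inf_const_add _ ⟨∅, Finset.mem_univ ∅⟩]
  rfl

end Scale

/-- The entropy polynomial `φ_L(v) = max { Σ_{j ∈ J} v_j - h_J : J ⊆ [n], h_J ≠ ∞ }`. -/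
def entPoly (A : Matrix (Fin r) (Fin n) (LaurentSeries k)) (v : Fin n → ℝ) : ℝ :=
  sSup {x : ℝ | ∃ J : Finset (Fin n), entropy A J ≠ ⊤ ∧
    x = ∑ j ∈ J, v j - (((entropy A J).untopD 0 : ℤ) : ℝ)}

/-- Membership in the support `|Σ_L|` of the polyhedral complex `Σ_L`: for every
coordinate `j` there is a set `J ∋ j` with `h_J ≠ ∞` whose monomial attains `φ_L(v)`. -/
def inSigma (A : Matrix (Fin r) (Fin n) (LaurentSeries k)) (v : Fin n → ℝ) : Prop :=
  ∀ j : Fin n, ∃ J : Finset (Fin n), j ∈ J ∧ entropy A J ≠ ⊤ ∧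
    entPoly A v = ∑ i ∈ J, v i - (((entropy A J).untopD 0 : ℤ) : ℝ)

section Bridge

lemma bridge_J (A : Matrix (Fin r) (Fin n) (LaurentSeries k)) (v : Fin n → ℤ) (μ₀ : ℤ)
    (J : Finset (Fin n)) :
    (entropy A J ≠ ⊤ ∧
      (∑ i ∈ J, ((v i : ℤ) : ℝ)) - (((entropy A J).untopD 0 : ℤ) : ℝ) = ((-μ₀ : ℤ) : ℝ))
    ↔ entropy (Matrix.of fun i j' => HahnSeries.single (-(v j')) (1:k) * A i j') J
        = ((μ₀ : ℤ) : WithTop ℤ) := by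
  rw [entropy_scale]
  constructor
  · rintro ⟨h1, h2⟩
    obtain ⟨e, he⟩ := WithTop.ne_top_iff_exists.mp h1
    rw [← he, WithTop.untopD_coe] at h2
    rw [← he, ← WithTop.coe_add, WithTop.coe_eq_coe]
    have h3 : (∑ i ∈ J, v i : ℝ) - (e : ℝ) = (-μ₀ : ℝ) := by push_cast at h2 ⊢; linarith
    have h4 : (∑ i ∈ J, v i) - e = -μ₀ := by exact_mod_cast h3
    omega
  · intro h
    cases htop : entropy A J with
    | top => rw [htop, WithTop.add_top] at h; exact absurd h (by simp)
    | coe e =>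
        rw [htop, ← WithTop.coe_add, WithTop.coe_eq_coe] at h
        refine ⟨WithTop.coe_ne_top, ?_⟩
        rw [WithTop.untopD_coe]
        push_cast
        have : -(∑ i ∈ J, v i) + e = μ₀ := h
        have h5 : (e : ℝ) = (∑ i ∈ J, (v i : ℝ)) - (-(μ₀ : ℝ)) := by push_cast [← this]; ring
        linarith [h5]

lemma bridge_poly (A : Matrix (Fin r) (Fin n) (LaurentSeries k)) (v : Fin n → ℤ) (μ₀ : ℤ)
    (hμ : ((Finset.univ : Finset (Finset (Fin n))).inf fun K =>
        entropy (Matrix.of fun i j' => HahnSeries.single (-(v j')) (1:k) * A i j') K)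
      = ((μ₀ : ℤ) : WithTop ℤ)) :
    entPoly A (fun j => ((v j : ℤ) : ℝ)) = ((-μ₀ : ℤ) : ℝ) := by
  apply IsGreatest.csSup_eq
  constructor
  · obtain ⟨J₀, -, hJ₀⟩ := Finset.exists_mem_eq_inf
      (Finset.univ : Finset (Finset (Fin n))) ⟨∅, Finset.mem_univ ∅⟩
      (fun K => entropy (Matrix.of fun i j' => HahnSeries.single (-(v j')) (1:k) * A i j') K)
    rw [hJ₀] at hμ
    obtain ⟨h1, h2⟩ := (bridge_J A v μ₀ J₀).mpr hμ
    exact ⟨J₀, h1, h2.symm⟩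
  · rintro x ⟨J, hJ, rfl⟩
    obtain ⟨e, he⟩ := WithTop.ne_top_iff_exists.mp hJ
    have hinfle : ((μ₀ : ℤ) : WithTop ℤ) ≤
        entropy (Matrix.of fun i j' => HahnSeries.single (-(v j')) (1:k) * A i j') J := by
      rw [← hμ]
      exact Finset.inf_le (Finset.mem_univ J)
    rw [entropy_scale, ← he, ← WithTop.coe_add, WithTop.coe_le_coe] at hinfle
    rw [← he, WithTop.untopD_coe]
    have h6 : (∑ i ∈ J, v i) - e ≤ -μ₀ := by omega
    push_cast
    have h7 : ((∑ i ∈ J, v i : ℤ) : ℝ) - (e : ℝ) ≤ ((-μ₀ : ℤ) : ℝ) := by exact_mod_cast h6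
    push_cast at h7
    linarith

end Bridge

section Combine

lemma lval_const_mul_nonneg (c : ℂ) {z : LaurentSeries ℂ} (hz : (0:WithTop ℤ) ≤ lval z) :
    (0:WithTop ℤ) ≤ lval (HahnSeries.single (0:ℤ) c * z) := by
  by_cases hc : c = 0
  · subst hc
    rw [show HahnSeries.single (0:ℤ) (0:ℂ) = 0 from HahnSeries.single_eq_zero, zero_mul,
      lval_zero]
    exact le_top
  · rw [lval_mul, lval_of_ne (HahnSeries.single_ne_zero hc), HahnSeries.order_single hc]
    simpa using hz

lemma combine (B : Matrix (Fin r) (Fin n) (LaurentSeries ℂ))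
    (hws : ∀ j : Fin n, ∃ x : Fin n → LaurentSeries ℂ, ∃ y : Fin r → LaurentSeries ℂ,
      (∀ i, (0:WithTop ℤ) ≤ lval (y i)) ∧
      (∀ k', x k' = ∑ i, y i * B i k') ∧ (∀ k', (0:WithTop ℤ) ≤ lval (x k')) ∧
      lval (x j) = 0) :
    ∃ x : Fin n → LaurentSeries ℂ, ∃ y : Fin r → LaurentSeries ℂ,
      (∀ i, (0:WithTop ℤ) ≤ lval (y i)) ∧
      (∀ k', x k' = ∑ i, y i * B i k') ∧ ∀ k', lval (x k') = 0 := by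
  have key : ∀ s : Finset (Fin n), ∃ x : Fin n → LaurentSeries ℂ, ∃ y : Fin r → LaurentSeries ℂ,
      (∀ i, (0:WithTop ℤ) ≤ lval (y i)) ∧
      (∀ k', x k' = ∑ i, y i * B i k') ∧ (∀ k', (0:WithTop ℤ) ≤ lval (x k')) ∧
      ∀ k' ∈ s, (x k').coeff 0 ≠ 0 := by
    intro s
    induction s using Finset.induction_on with
    | empty =>
        refine ⟨0, 0, ?_, ?_, ?_, ?_⟩
        · intro i; rw [Pi.zero_apply, lval_zero]; exact le_top
        · intro k'; simp
        · intro k'; rw [Pi.zero_apply, lval_zero]; exact le_top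
        · intro k' hk'; exact absurd hk' (Finset.notMem_empty k')
    | @insert j₀ s hj₀ ih =>
        obtain ⟨x, y, hy, hxeq, hx0, hxc⟩ := ih
        obtain ⟨w, z, hz, hweq, hw0, hwj⟩ := hws j₀
        have hwc : (w j₀).coeff 0 ≠ 0 := coeff_zero_ne_of_lval_eq_zero hwj
        set bad : Finset ℂ :=
          (insert j₀ s).image (fun k' => -((x k').coeff 0) / ((w k').coeff 0)) with hbad
        obtain ⟨lam, hlam⟩ := Infinite.exists_notMem_finset bad
        set C : LaurentSeries ℂ := HahnSeries.single (0:ℤ) lam with hC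
        refine ⟨fun k' => x k' + C * w k', fun i => y i + C * z i, ?_, ?_, ?_, ?_⟩
        · intro i
          exact le_lval_add (hy i) (lval_const_mul_nonneg lam (hz i))
        · intro k'
          show x k' + C * w k' = _
          rw [hxeq k', hweq k', Finset.mul_sum, ← Finset.sum_add_distrib]
          refine Finset.sum_congr rfl fun i _ => ?_
          ring
        · intro k'
          exact le_lval_add (hx0 k') (lval_const_mul_nonneg lam (hw0 k'))
        · intro k' hk'
          show (x k' + C * w k').coeff 0 ≠ 0
          have hcoeff : (x k' + C * w k').coeff 0 = (x k').coeff 0 + lam * (w k').coeff 0 := by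
            rw [HahnSeries.coeff_add, hC, HahnSeries.coeff_single_zero_mul]
          rw [hcoeff]
          by_cases hwk : (w k').coeff 0 = 0
          · rw [hwk, mul_zero, add_zero]
            have hk's : k' ∈ s := by
              rcases Finset.mem_insert.mp hk' with rfl | h
              · exact absurd hwk hwc
              · exact h
            exact hxc k' hk's
          · intro hzero
            apply hlam
            rw [hbad]
            refine Finset.mem_image.mpr ⟨k', hk', ?_⟩
            field_simp
            linear_combination -hzero
  obtain ⟨x, y, hy, hxeq, hx0, hxc⟩ := key Finset.univ
  exact ⟨x, y, hy, hxeq, fun k' =>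
    lval_eq_zero_of_coeff (hx0 k') (hxc k' (Finset.mem_univ k'))⟩

end Combine
/-- **Theorem A over `ℂ((t))`.** For a lattice `L ⊆ ℂ((t))^n` of rank `r`
(`1 ≤ r ≤ n`), not contained in any coordinate hyperplane,
`trop(L) = |Σ_L| ∩ ℤ^n`. -/

theorem trop_eq_sigma_inter_int_complexLaurent
    {r n : ℕ} (hr : 1 ≤ r) (hrn : r ≤ n)
    (A : Matrix (Fin r) (Fin n) (LaurentSeries ℂ))
    (hrank : A.rank = r)
    (hhyp : ∀ j : Fin n, ∃ x : Fin n → LaurentSeries ℂ, inRowSpan A x ∧ x j ≠ 0)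
    (v : Fin n → ℤ) :
    tropMem A v ↔ inSigma A (fun j => (v j : ℝ)) := by
  set Bv : Matrix (Fin r) (Fin n) (LaurentSeries ℂ) :=
    Matrix.of fun i j' => HahnSeries.single (-(v j')) (1:ℂ) * A i j' with hBv
  have hμ0top : ((Finset.univ : Finset (Finset (Fin n))).inf fun K => entropy Bv K) ≠ ⊤ := by
    intro h
    have h2 : ((Finset.univ : Finset (Finset (Fin n))).inf fun K => entropy Bv K)
        ≤ entropy Bv ∅ := Finset.inf_le (Finset.mem_univ ∅)
    rw [h, entropy_empty] at h2
    simp at h2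
  obtain ⟨μ₀, hμ⟩ : ∃ z : ℤ,
      ((Finset.univ : Finset (Finset (Fin n))).inf fun K => entropy Bv K)
      = ((z : ℤ) : WithTop ℤ) := by
    rcases WithTop.ne_top_iff_exists.mp hμ0top with ⟨z, hz⟩
    exact ⟨z, hz.symm⟩
  constructor
  · rintro ⟨x, ⟨y, hy, hxy⟩, hx⟩
    set x' : Fin n → LaurentSeries ℂ :=
      fun j' => HahnSeries.single (-(v j')) (1:ℂ) * x j' with hx'
    have hx'0 : ∀ j', lval (x' j') = 0 := by
      intro j'
      show lval (HahnSeries.single (-(v j')) (1:ℂ) * x j') = 0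
      rw [lval_mul, lval_single, (hx j').2, ← WithTop.coe_add]
      norm_num
    have hx'eq : ∀ j', x' j' = ∑ i, y i * Bv i j' := by
      intro j'
      show HahnSeries.single (-(v j')) (1:ℂ) * x j' = _
      rw [hxy j', Finset.mul_sum]
      refine Finset.sum_congr rfl fun i _ => ?_
      show _ = y i * (HahnSeries.single (-(v j')) (1:ℂ) * A i j')
      ring
    intro j
    obtain ⟨J, hjJ, hJ⟩ := lemma_down hy hx'eq (fun k' => le_of_eq (hx'0 k').symm) (hx'0 j)
    rw [hμ] at hJ
    obtain ⟨h1, h2⟩ := (bridge_J A v μ₀ J).mpr hJ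
    refine ⟨J, hjJ, h1, ?_⟩
    rw [show (fun j => ((v j : ℤ) : ℝ)) = fun j => ((v j : ℤ) : ℝ) from rfl]
    rw [bridge_poly A v μ₀ hμ]
    exact h2.symm
  · intro hσ
    have hws : ∀ j : Fin n, ∃ xw : Fin n → LaurentSeries ℂ, ∃ yw : Fin r → LaurentSeries ℂ,
        (∀ i, (0:WithTop ℤ) ≤ lval (yw i)) ∧
        (∀ k', xw k' = ∑ i, yw i * Bv i k') ∧ (∀ k', (0:WithTop ℤ) ≤ lval (xw k')) ∧
        lval (xw j) = 0 := by
      intro j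
      obtain ⟨J, hjJ, h1, h2⟩ := hσ j
      have h3 : entropy Bv J = ((μ₀ : ℤ) : WithTop ℤ) := by
        apply (bridge_J A v μ₀ J).mp
        refine ⟨h1, ?_⟩
        rw [← h2, bridge_poly A v μ₀ hμ]
      obtain ⟨xw, yw, h4, h5, h6, h7⟩ := lemma_up hjJ (by rw [h3, hμ])
      exact ⟨xw, yw, h4, h5, h6, h7⟩
    obtain ⟨x', y', hy', hx'eq, hx'0⟩ := combine Bv hws
    refine ⟨fun j' => HahnSeries.single ((v j') : ℤ) (1:ℂ) * x' j', ⟨y', hy', ?_⟩, ?_⟩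
    · intro j'
      show HahnSeries.single ((v j') : ℤ) (1:ℂ) * x' j' = _
      rw [hx'eq j', Finset.mul_sum]
      refine Finset.sum_congr rfl fun i _ => ?_
      have hss : HahnSeries.single ((v j') : ℤ) (1:ℂ) *
          HahnSeries.single (-(v j')) (1:ℂ) = 1 := by
        rw [HahnSeries.single_mul_single, one_mul, add_neg_cancel]
        exact HahnSeries.single_zero_one
      calc HahnSeries.single ((v j') : ℤ) (1:ℂ) * (y' i * Bv i j')
          = (HahnSeries.single ((v j') : ℤ) (1:ℂ) * HahnSeries.single (-(v j')) (1:ℂ)) *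
            (y' i * A i j') := by
            show HahnSeries.single ((v j') : ℤ) (1:ℂ) *
              (y' i * (HahnSeries.single (-(v j')) (1:ℂ) * A i j')) = _
            ring
        _ = y' i * A i j' := by rw [hss, one_mul]
    · intro j'
      have hval : lval (HahnSeries.single ((v j') : ℤ) (1:ℂ) * x' j') =
          ((v j' : ℤ) : WithTop ℤ) := by
        rw [lval_mul, lval_single, hx'0 j', add_zero]
      refine ⟨?_, hval⟩
      intro h0
      have h0' : HahnSeries.single ((v j') : ℤ) (1:ℂ) * x' j' = 0 := h0
      rw [h0', lval_zero] at hval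
      simp at hval

end
end

section
/- Let m, n ≥ 1 and let g_1, …, g_m ∈ ℤ[x_1, …, x_n] be polynomials with integer coefficients. Suppose the system has a complex solution, i.e. there exists a ∈ ℂ^n with g_i(a) = 0 for all i (evaluating via the ring map ℤ → ℂ). Then for all but finitely many prime numbers p, the system has a solution over an algebraic closure of 𝔽_p; that is, the set of primes p for which there is no b ∈ (𝔽̄_p)^n with g_i(b) = 0 for all i (evaluating via the ring map ℤ → 𝔽̄_p) is finite. -/
open FirstOrder Language Field Ring FreeCommRing

/-- Evaluating the free-comm-ring preimage of an integer `MvPolynomial` agrees with `aeval`. -/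
lemma lift_freeCommRingEquivMvPolynomialInt_symm {n : ℕ} {K : Type*} [CommRing K]
    (P : MvPolynomial (Fin n) ℤ) (x : Fin n → K) :
    FreeCommRing.lift x ((freeCommRingEquivMvPolynomialInt (Fin n)).symm P) =
      MvPolynomial.aeval x P := by
  show FreeCommRing.lift x
    (MvPolynomial.eval₂Hom (Int.castRingHom (FreeCommRing (Fin n))) of P) = _
  induction P using MvPolynomial.induction_on with
  | C r => simp
  | add p q hp hq => simp only [MvPolynomial.coe_eval₂Hom] at hp hq; simp [map_add, hp, hq]
  | mul_X p i hp => simp only [MvPolynomial.coe_eval₂Hom] at hp; simp [map_mul, hp]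

/-- **Transfer of complex solutions to positive characteristic (Lemma 3.1).** If a system
of integer polynomials `g_1, …, g_m ∈ ℤ[x_1, …, x_n]` has a complex solution, then for
all but finitely many primes `p` it has a solution over an algebraic closure of `𝔽_p`. -/
theorem exists_solution_in_algClosure_zmod_of_complex_solution
    {m n : ℕ} (hm : 1 ≤ m) (hn : 1 ≤ n)
    (g : Fin m → MvPolynomial (Fin n) ℤ)
    (a : Fin n → ℂ) (ha : ∀ i, MvPolynomial.aeval a (g i) = 0) :
    ∃ S : Finset ℕ, ∀ (p : ℕ) [Fact p.Prime], p ∉ S →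
      ∃ b : Fin n → AlgebraicClosure (ZMod p),
        ∀ i, MvPolynomial.aeval b (g i) = 0 := by
  classical
  set q : Fin m → FreeCommRing (Fin n) :=
    fun i => (freeCommRingEquivMvPolynomialInt (Fin n)).symm (g i) with hq
  set ψ : Language.ring.Formula (Fin n) :=
    BoundedFormula.iInf
      (fun i : Fin m => Term.equal (termOfFreeCommRing (q i)) (termOfFreeCommRing 0)) with hψ
  set φ : Language.ring.Sentence :=
    Formula.iExs (Fin n) (ψ.relabel (Sum.inr : Fin n → Empty ⊕ Fin n)) with hφ
  -- realization of `φ` in any compatible field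
  have hreal : ∀ (K : Type) [Field K] [CompatibleRing K],
      (K ⊨ φ) ↔ ∃ x : Fin n → K, ∀ i, MvPolynomial.aeval x (g i) = 0 := by
    intro K _ _
    rw [hφ, Sentence.Realize, Formula.realize_iExs]
    refine exists_congr fun x => ?_
    rw [Formula.realize_relabel, Sum.elim_comp_inr]
    rw [hψ, Formula.Realize, BoundedFormula.realize_iInf]
    simp [Formula.Realize, Term.equal, realize_termOfFreeCommRing,
      lift_freeCommRingEquivMvPolynomialInt_symm, hq]
  -- ℂ realizes φ
  have hC : Theory.ACF 0 ⊨ᵇ φ := by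
    letI := compatibleRingOfRing ℂ
    haveI : CharP ℂ 0 := CharP.ofCharZero ℂ
    exact ((ACF_isComplete (Or.inr rfl)).realize_sentence_iff φ ℂ).mp
      ((hreal ℂ).mpr ⟨a, ha⟩)
  have hfin := finite_ACF_prime_not_realize_of_ACF_zero_realize φ hC
  refine ⟨hfin.toFinset.image (fun p : Nat.Primes => (p : ℕ)), ?_⟩
  intro p hp hpS
  have hprime : p.Prime := hp.out
  have hmodels : Theory.ACF p ⊨ᵇ φ := by
    by_contra h
    exact hpS (Finset.mem_image.2 ⟨⟨p, hprime⟩, hfin.mem_toFinset.2 h, rfl⟩)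
  letI := compatibleRingOfRing (AlgebraicClosure (ZMod p))
  haveI : CharP (AlgebraicClosure (ZMod p)) p :=
    charP_of_injective_algebraMap
      (RingHom.injective (algebraMap (ZMod p) (AlgebraicClosure (ZMod p)))) p
  exact (hreal (AlgebraicClosure (ZMod p))).mp
    (((ACF_isComplete (Or.inl hprime)).realize_sentence_iff φ
      (AlgebraicClosure (ZMod p))).mpr hmodels)
end

section
/- Let n, m ≥ 1, let f_1, …, f_r ∈ ℤ[x_1, …, x_n] and g_1, …, g_ℓ ∈ ℤ[x_1, …, x_n, y_1, …, y_m]. Suppose there is a finite set S of primes such that for every prime p ∉ S and every b ∈ (𝔽̄_p)^n with f_i(b) = 0 for all i, there exists c ∈ (𝔽̄_p)^m with g_j(b; c) = 0 for all j (and f_i(b) = 0 for all i). Then for every a ∈ ℂ^n with f_i(a) = 0 for all i, there exists z ∈ ℂ^m with g_j(a; z) = 0 for all j. -/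
open FirstOrder Language Field Ring

/-- The term of the language of rings corresponding to a multivariable integer polynomial. -/
noncomputable def polyTerm {σ : Type*} (p : MvPolynomial σ ℤ) : Language.ring.Term σ :=
  Ring.termOfFreeCommRing (MvPolynomial.aeval FreeCommRing.of p)

lemma realize_polyTerm {σ : Type*} {R : Type*} [CommRing R] [CompatibleRing R]
    (p : MvPolynomial σ ℤ) (v : σ → R) :
    (polyTerm p).realize v = MvPolynomial.aeval v p := by
  rw [polyTerm, realize_termOfFreeCommRing]
  induction p using MvPolynomial.induction_on with
  | C a => simp
  | add p q hp hq => simp [hp, hq]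
  | mul_X p i hp => simp [hp]

lemma realize_iInf_formula {L : Language} {M : Type*} [L.Structure M] {α β : Type*}
    [Fintype β] (φ : β → L.Formula α) (v : α → M) :
    Formula.Realize (BoundedFormula.iInf φ) v ↔ ∀ b ∈ (Finset.univ : Finset β),
      Formula.Realize (φ b) v := by
  simp [Formula.Realize, BoundedFormula.realize_iInf]

/-- The sentence expressing that every solution of the system `f` extends to a solution of the
system `g`. -/
noncomputable def extSentence {n m r ℓ : ℕ} (f : Fin r → MvPolynomial (Fin n) ℤ)
    (g : Fin ℓ → MvPolynomial (Fin n ⊕ Fin m) ℤ) : Language.ring.Sentence :=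
  Formula.iAlls (Fin n) (Formula.relabel (Sum.inr : Fin n → Empty ⊕ Fin n)
    ((BoundedFormula.iInf fun i =>
        Term.equal (polyTerm (f i)) (polyTerm (0 : MvPolynomial (Fin n) ℤ))).imp
      (Formula.iExs (Fin m)
        (BoundedFormula.iInf fun j =>
          Term.equal (polyTerm (g j)) (polyTerm (0 : MvPolynomial (Fin n ⊕ Fin m) ℤ))))))

lemma realize_extSentence {n m r ℓ : ℕ} (f : Fin r → MvPolynomial (Fin n) ℤ)
    (g : Fin ℓ → MvPolynomial (Fin n ⊕ Fin m) ℤ) (K : Type*) [Field K] [CompatibleRing K] :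
    K ⊨ extSentence f g ↔
      ∀ b : Fin n → K, (∀ i, MvPolynomial.aeval b (f i) = 0) →
        ∃ c : Fin m → K, ∀ j, MvPolynomial.aeval (Sum.elim b c) (g j) = 0 := by
  rw [extSentence, Sentence.Realize, Formula.realize_iAlls]
  refine forall_congr' fun b => ?_
  rw [Formula.realize_relabel, Formula.realize_imp]
  have h1 : ((fun a => Sum.elim (default : Empty → K) b a) ∘ Sum.inr) = b := rfl
  rw [h1]
  refine imp_congr ?_ ?_
  · rw [realize_iInf_formula]
    simp only [Finset.mem_univ, true_implies]
    refine forall_congr' fun i => ?_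
    rw [Formula.realize_equal, realize_polyTerm, realize_polyTerm]
    simp
  · rw [Formula.realize_iExs]
    refine exists_congr fun c => ?_
    rw [realize_iInf_formula]
    simp only [Finset.mem_univ, true_implies]
    refine forall_congr' fun j => ?_
    rw [Formula.realize_equal, realize_polyTerm, realize_polyTerm]
    simp

/-- **Transfer of solvability from positive characteristic to `ℂ` (Lemma 3.2).** Let
`f_1, …, f_r ∈ ℤ[x_1, …, x_n]` and `g_1, …, g_ℓ ∈ ℤ[x_1, …, x_n, y_1, …, y_m]`. If
there is a finite set `S` of primes such that for every prime `p ∉ S`, every solution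
`b ∈ 𝔽̄_p^n` of the system `f` extends to a solution `(b; c)` of the system `g` with
`c ∈ 𝔽̄_p^m`, then every complex solution `a ∈ ℂ^n` of `f` extends to a complex solution
`(a; z)` of `g`. -/
theorem exists_complex_extension_of_finite_field_extensions
    {n m : ℕ} (hn : 1 ≤ n) (hm : 1 ≤ m) {r ℓ : ℕ}
    (f : Fin r → MvPolynomial (Fin n) ℤ)
    (g : Fin ℓ → MvPolynomial (Fin n ⊕ Fin m) ℤ)
    (S : Finset ℕ)
    (hfib : ∀ (p : ℕ) [Fact p.Prime], p ∉ S →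
      ∀ b : Fin n → AlgebraicClosure (ZMod p),
        (∀ i, MvPolynomial.aeval b (f i) = 0) →
        ∃ c : Fin m → AlgebraicClosure (ZMod p),
          ∀ j, MvPolynomial.aeval (Sum.elim b c) (g j) = 0) :
    ∀ a : Fin n → ℂ, (∀ i, MvPolynomial.aeval a (f i) = 0) →
      ∃ z : Fin m → ℂ, ∀ j, MvPolynomial.aeval (Sum.elim a z) (g j) = 0 := by
  have hprime : ∀ p : Nat.Primes, (p : ℕ) ∉ S → Theory.ACF (p : ℕ) ⊨ᵇ extSentence f g := by
    intro p hpS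
    haveI : Fact (p : ℕ).Prime := ⟨p.2⟩
    let K := AlgebraicClosure (ZMod (p : ℕ))
    letI := compatibleRingOfRing K
    rw [← (ACF_isComplete (Or.inl p.2)).realize_sentence_iff _ K, realize_extSentence]
    exact hfib (p : ℕ) hpS
  have h0 : Theory.ACF 0 ⊨ᵇ extSentence f g := by
    rw [ACF_zero_realize_iff_infinite_ACF_prime_realize]
    have hinf : {p : Nat.Primes | (p : ℕ) ∉ S}.Infinite := by
      have : Infinite Nat.Primes := Nat.infinite_setOf_prime.to_subtype
      apply Set.infinite_of_finite_compl
      refine Set.Finite.subset ?_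
        (fun p hp => by simpa using hp : {p : Nat.Primes | (p : ℕ) ∉ S}ᶜ ⊆
          {p : Nat.Primes | (p : ℕ) ∈ S})
      have hinj : Set.InjOn (fun p : Nat.Primes => (p : ℕ)) {p : Nat.Primes | (p : ℕ) ∈ S} := by
        intro a _ b _ hab
        exact (Nat.Primes.coe_nat_inj a b).mp hab
      have himage : (fun p : Nat.Primes => (p : ℕ)) '' {p : Nat.Primes | (p : ℕ) ∈ S} ⊆ S := by
        rintro x ⟨p, hp, rfl⟩; exact hp
      exact Set.Finite.of_finite_image (Set.Finite.subset S.finite_toSet himage) hinj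
    exact hinf.mono fun p hp => hprime p hp
  intro a ha
  letI := compatibleRingOfRing ℂ
  rw [← (ACF_isComplete (Or.inr rfl)).realize_sentence_iff _ ℂ, realize_extSentence] at h0
  exact h0 a ha
end

section
/- Let k be an infinite field and F = k((t)) with normalized valuation val. Fix v ∈ ℤ^n and suppose x^{(1)}, …, x^{(n)} ∈ F^n are vectors satisfying val(x^{(j)}_j) = v_j for each j and val(x^{(j)}_i) ≥ v_i for all i, j. Then there exist scalars a_1, …, a_n ∈ k (viewed as constant series in F) such that the vector z := a_1 x^{(1)} + ⋯ + a_n x^{(n)} satisfies val(z_j) = v_j for all j ∈ {1,…,n}. Consequently, if all the x^{(j)} lie in a common O_F-submodule L ⊆ F^n, then v ∈ trop(L). -/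
open scoped Classical

noncomputable section

lemma lval_coeff_sum {k : Type} [Field k] {n : ℕ} (f : Fin n → LaurentSeries k) (d : ℤ) :
    (∑ i, f i).coeff d = ∑ i, (f i).coeff d := by
  classical
  induction (Finset.univ : Finset (Fin n)) using Finset.cons_induction with
  | empty => simp
  | cons a s ha ih => simp [Finset.sum_insert ha, HahnSeries.coeff_add, ih]

lemma lval_eq_of {k : Type} [Field k] {x : LaurentSeries k} {m : ℤ}
    (h1 : x.coeff m ≠ 0) (h2 : ∀ d : ℤ, d < m → x.coeff d = 0) :
    lval x = (m : WithTop ℤ) := by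
  have hx : x ≠ 0 := fun h => h1 (by simp [h])
  have hle : x.order ≤ m := HahnSeries.order_le_of_coeff_ne_zero h1
  have hge : m ≤ x.order := by
    by_contra hlt
    push_neg at hlt
    exact (mt HahnSeries.coeff_order_eq_zero.mp hx) (h2 _ hlt)
  rw [lval, if_neg hx]
  exact_mod_cast le_antisymm hle hge

lemma lval_coeff_zero {k : Type} [Field k] {x : LaurentSeries k} {m d : ℤ}
    (h : ((m : ℤ) : WithTop ℤ) ≤ lval x) (hd : d < m) : x.coeff d = 0 := by
  rw [lval] at h
  split_ifs at h with hx
  · simp [hx]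
  · apply HahnSeries.coeff_eq_zero_of_lt_order
    have : (m : WithTop ℤ) ≤ (x.order : WithTop ℤ) := h
    exact lt_of_lt_of_le hd (by exact_mod_cast this)

/-- **Generic linear combinations achieve the coordinatewise minimum valuation.** Let `k`
be an infinite field, `F = k((t))`, and `v ∈ ℤ^n`. If `x^{(1)}, …, x^{(n)} ∈ F^n` satisfy
`val(x^{(j)}_j) = v_j` and `val(x^{(j)}_i) ≥ v_i` for all `i, j`, then there are scalars
`a_1, …, a_n ∈ k` (constant series) such that `z := a_1 x^{(1)} + ⋯ + a_n x^{(n)}`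
satisfies `val(z_j) = v_j` for all `j`; consequently, if all the `x^{(j)}` lie in a common
`O_F`-submodule `L ⊆ F^n`, then `v ∈ trop(L)`. -/
theorem exists_generic_combination_with_valuation
    {k : Type} [Field k] [Infinite k] {n : ℕ}
    (v : Fin n → ℤ) (x : Fin n → Fin n → LaurentSeries k)
    (hdiag : ∀ j, lval (x j j) = ((v j : ℤ) : WithTop ℤ))
    (hge : ∀ j i, ((v i : ℤ) : WithTop ℤ) ≤ lval (x j i)) :
    (∃ a : Fin n → k, ∀ j : Fin n,
      lval (∑ i, (HahnSeries.C (a i) : LaurentSeries k) * x i j) = ((v j : ℤ) : WithTop ℤ)) ∧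
    ∀ L : Submodule (PowerSeries k) (Fin n → LaurentSeries k),
      (∀ j, x j ∈ L) →
      ∃ z : Fin n → LaurentSeries k, z ∈ L ∧
        ∀ j, z j ≠ 0 ∧ lval (z j) = ((v j : ℤ) : WithTop ℤ) := by
  classical
  -- coefficient matrix
  set c : Fin n → Fin n → k := fun i j => (x i j).coeff (v j) with hc
  have hcii : ∀ j, c j j ≠ 0 := by
    intro j
    have hx : x j j ≠ 0 := by
      intro h
      have := hdiag j
      rw [lval, if_pos h] at this
      exact (WithTop.coe_ne_top (a := v j)) this.symm
    have horder : (x j j).order = v j := by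
      have := hdiag j
      rw [lval, if_neg hx] at this
      exact_mod_cast this
    have := mt HahnSeries.coeff_order_eq_zero.mp hx
    rwa [horder] at this
  -- the polynomial ∏ j, ∑ i, c i j * X i is nonzero, so has a nonvanishing point
  have key : ∃ a : Fin n → k, ∀ j, (∑ i, c i j * a i) ≠ 0 := by
    set P : MvPolynomial (Fin n) k :=
      ∏ j, ∑ i, MvPolynomial.C (c i j) * MvPolynomial.X i with hP
    have hPne : P ≠ 0 := by
      apply Finset.prod_ne_zero_iff.mpr
      intro j _
      intro h
      have := congrArg (MvPolynomial.coeff (Finsupp.single j 1)) h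
      simp only [MvPolynomial.coeff_sum, MvPolynomial.coeff_zero] at this
      rw [Finset.sum_eq_single j] at this
      · rw [MvPolynomial.coeff_C_mul, MvPolynomial.coeff_X] at this
        exact hcii j (by simpa using this)
      · intro i _ hij
        rw [MvPolynomial.coeff_C_mul, MvPolynomial.coeff_X', if_neg, mul_zero]
        exact fun hEq => hij (by
          have := congrArg (fun f => f i) hEq
          simpa [Finsupp.single_apply, eq_comm] using
            (Finsupp.single_left_injective one_ne_zero (hEq.trans rfl)).symm ▸ rfl)
      · simp
    have : ∃ a : Fin n → k, MvPolynomial.eval a P ≠ 0 := by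
      by_contra hcon
      push_neg at hcon
      exact hPne (MvPolynomial.funext (fun a => by simp [hcon a]))
    obtain ⟨a, ha⟩ := this
    refine ⟨a, fun j hj => ha ?_⟩
    rw [hP, MvPolynomial.eval_prod]
    apply Finset.prod_eq_zero (Finset.mem_univ j)
    simpa using hj
  obtain ⟨a, ha⟩ := key
  -- the main valuation computation
  have main : ∀ j : Fin n,
      lval (∑ i, (HahnSeries.C (a i) : LaurentSeries k) * x i j) = ((v j : ℤ) : WithTop ℤ) := by
    intro j
    have hcoeff : ∀ d : ℤ,
        (∑ i, (HahnSeries.C (a i) : LaurentSeries k) * x i j).coeff d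
          = ∑ i, a i * (x i j).coeff d := by
      intro d
      rw [lval_coeff_sum]
      refine Finset.sum_congr rfl fun i _ => ?_
      rw [HahnSeries.C_mul_eq_smul, HahnSeries.coeff_smul, smul_eq_mul]
    apply lval_eq_of
    · rw [hcoeff]
      have := ha j
      rw [show (∑ i, a i * (x i j).coeff (v j)) = ∑ i, c i j * a i by
        exact Finset.sum_congr rfl fun i _ => mul_comm _ _]
      exact this
    · intro d hd
      rw [hcoeff]
      apply Finset.sum_eq_zero
      intro i _
      rw [lval_coeff_zero (hge i j) hd, mul_zero]
  refine ⟨⟨a, main⟩, ?_⟩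
  intro L hL
  refine ⟨∑ i, (PowerSeries.C (a i)) • x i, ?_, ?_⟩
  · exact Submodule.sum_mem L fun i _ => Submodule.smul_mem L _ (hL i)
  · intro j
    have hz : (∑ i, (PowerSeries.C (a i)) • x i) j
        = ∑ i, (HahnSeries.C (a i) : LaurentSeries k) * x i j := by
      rw [Finset.sum_apply]
      refine Finset.sum_congr rfl fun i _ => ?_
      rw [Pi.smul_apply, Algebra.smul_def, LaurentSeries.coe_algebraMap,
        HahnSeries.ofPowerSeries_C]
    rw [hz]
    refine ⟨?_, main j⟩
    intro h0
    have := main j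
    rw [h0, lval, if_pos rfl] at this
    exact (WithTop.coe_ne_top (a := v j)) this.symm

end
end
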